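/- Fix N, n ∈ ℕ with n ≥ 1, a matrix g : Fin N → Fin N → ℂ, and multi-indices α, β with |α| = |β| = n. For every index I with α_I ≥ 1, the permanent of the block-constant matrix G^{α,β} admits the block-row expansion P(α, β) = Σ_{J=1}^{N} β_J · g(I, J) · P(α − e_I, β − e_J), where the terms with β_J = 0 vanish. -/
import Mathlib


open Finset

lemma blk_lt {N : ℕ} (α : Fin N → ℕ) (x : Fin (∑ i, α i)) :
    ({p : Fin N | ∑ i ∈ Finset.Iic p, α i ≤ (x : ℕ)} : Finset (Fin N)).card < N := by
  cases N with
  | zero => exact absurd x.isLt (by simp)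
  | succ M =>
    have hIic : Finset.Iic (Fin.last M) = (Finset.univ : Finset (Fin (M + 1))) := by
      ext p; simp [Fin.le_last]
    have hmem : Fin.last M ∉
        ({p : Fin (M + 1) | ∑ i ∈ Finset.Iic p, α i ≤ (x : ℕ)} : Finset (Fin (M + 1))) := by
      simp only [Finset.mem_filter, Finset.mem_univ, true_and, not_le, hIic]
      exact x.isLt
    have hss : ({p : Fin (M + 1) | ∑ i ∈ Finset.Iic p, α i ≤ (x : ℕ)} : Finset (Fin (M + 1)))
        ⊂ Finset.univ := by
      refine Finset.ssubset_univ_iff.mpr fun h => hmem ?_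
      rw [h]; exact Finset.mem_univ _
    simpa using Finset.card_lt_card hss

/-- The block (among consecutive blocks of sizes `α 0, …, α (N-1)`) containing position `x`:
positions `0, …, α 0 - 1` lie in block `0`, the next `α 1` positions in block `1`, etc. -/
def blkIdx {N : ℕ} (α : Fin N → ℕ) (x : Fin (∑ i, α i)) : Fin N :=
  ⟨({p : Fin N | ∑ i ∈ Finset.Iic p, α i ≤ (x : ℕ)} : Finset (Fin N)).card, blk_lt α x⟩

/-- `blockPerm g α β` is the permanent of the `n × n` block-constant matrix `G^{α,β}`
(`n = |α| = |β|`) whose rows are partitioned into consecutive blocks of sizes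
`α 0, …, α (N-1)`, columns into consecutive blocks of sizes `β 0, …, β (N-1)`, and whose
entry in row-block `p` and column-block `q` is `g p q`.  (If `|α| ≠ |β|` the value is `0`.) -/
noncomputable def blockPerm {N : ℕ} (g : Fin N → Fin N → ℂ) (α β : Fin N → ℕ) : ℂ :=
  if h : ∑ i, α i = ∑ i, β i then
    Matrix.permanent
      (Matrix.of fun x y : Fin (∑ i, α i) => g (blkIdx α x) (blkIdx β (Fin.cast h y)))
  else 0

open Equiv in
theorem perm_succ_col_zero {R : Type*} [CommRing R] {n : ℕ}
    (A : Matrix (Fin n.succ) (Fin n.succ) R) :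
    A.permanent = ∑ i : Fin n.succ, A i 0 * (A.submatrix i.succAbove Fin.succ).permanent := by
  rw [Matrix.permanent, Finset.univ_perm_fin_succ, ← Finset.univ_product_univ]
  simp only [Finset.sum_map, Equiv.toEmbedding_apply, Finset.sum_product, Matrix.permanent,
    Finset.mul_sum]
  refine Finset.sum_congr rfl fun i _ => Fin.cases ?_ (fun i => ?_) i
  · refine Finset.sum_congr rfl fun σ _ => ?_
    simp only [Fin.prod_univ_succ, Equiv.Perm.decomposeFin_symm_apply_zero,
      Equiv.Perm.decomposeFin_symm_apply_succ, Equiv.swap_self, Equiv.coe_refl, id_eq,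
      Matrix.submatrix_apply, Fin.succAbove_zero]
  · refine Fintype.sum_equiv (Equiv.mulLeft i.cycleRange) _ _ fun σ => ?_
    rw [Fin.prod_univ_succ, Equiv.Perm.decomposeFin_symm_apply_zero]
    congr 1
    refine Finset.prod_congr rfl fun j _ => ?_
    simp only [Equiv.Perm.decomposeFin_symm_apply_succ, Matrix.submatrix_apply,
      Equiv.coe_mulLeft, Equiv.Perm.mul_apply, Fin.succAbove_cycleRange]

theorem perm_succ_row_zero {R : Type*} [CommRing R] {n : ℕ}
    (A : Matrix (Fin n.succ) (Fin n.succ) R) :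
    A.permanent = ∑ j : Fin n.succ, A 0 j * (A.submatrix Fin.succ j.succAbove).permanent := by
  rw [← Matrix.permanent_transpose A, perm_succ_col_zero]
  refine Finset.sum_congr rfl fun j _ => ?_
  rw [← Matrix.permanent_transpose]
  simp [Matrix.transpose_submatrix]

theorem perm_succ_row {R : Type*} [CommRing R] {n : ℕ} (A : Matrix (Fin n.succ) (Fin n.succ) R)
    (r : Fin n.succ) :
    A.permanent = ∑ j : Fin n.succ, A r j * (A.submatrix r.succAbove j.succAbove).permanent := by
  rw [← Matrix.permanent_permute_cols r.cycleRange⁻¹ A, perm_succ_row_zero]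
  refine Finset.sum_congr rfl fun j _ => ?_
  congr 1
  · rw [Matrix.submatrix_apply, Equiv.Perm.inv_def, Fin.cycleRange_symm_zero, id]
  · congr 1
    ext k l
    simp [Equiv.Perm.inv_def, Fin.cycleRange_symm_succ]

theorem permanent_reindex {R : Type*} [CommRing R] {m n' : Type*} [DecidableEq m] [Fintype m]
    [DecidableEq n'] [Fintype n'] (e : m ≃ n') (M : Matrix n' n' R) :
    (M.submatrix e e).permanent = M.permanent := by
  unfold Matrix.permanent
  refine Fintype.sum_equiv (e.permCongr) _ _ fun σ => ?_
  refine Fintype.prod_equiv e _ _ fun i => ?_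
  simp [Equiv.permCongr_apply]

theorem permanent_cast {R : Type*} [CommRing R] {a b : ℕ} (h : a = b)
    (M : Matrix (Fin b) (Fin b) R) :
    (M.submatrix (Fin.cast h) (Fin.cast h)).permanent = M.permanent :=
  permanent_reindex (finCongr h) M

lemma blk_le_iff {N : ℕ} (α : Fin N → ℕ) (x : Fin (∑ i, α i)) (p : Fin N) :
    ∑ i ∈ Finset.Iic p, α i ≤ (x : ℕ) ↔ (p : ℕ) < (blkIdx α x : ℕ) := by
  set T : Finset (Fin N) := ({q : Fin N | ∑ i ∈ Finset.Iic q, α i ≤ (x : ℕ)} : Finset (Fin N))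
    with hT
  have hval : (blkIdx α x : ℕ) = T.card := rfl
  constructor
  · intro h
    have hsub : Finset.Iic p ⊆ T := by
      intro q hq
      simp only [hT, Finset.mem_filter, Finset.mem_univ, true_and]
      exact le_trans (Finset.sum_le_sum_of_subset (Finset.Iic_subset_Iic.mpr
        (Finset.mem_Iic.mp hq))) h
    have := Finset.card_le_card hsub
    rw [Fin.card_Iic] at this
    omega
  · intro h
    by_contra hc
    push_neg at hc
    have hsub : T ⊆ Finset.Iio p := by
      intro q hq
      simp only [hT, Finset.mem_filter, Finset.mem_univ, true_and] at hq
      rw [Finset.mem_Iio]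
      by_contra hq2
      push_neg at hq2
      exact absurd (le_trans (Finset.sum_le_sum_of_subset
        (Finset.Iic_subset_Iic.mpr hq2)) hq) (not_le.mpr hc)
    have := Finset.card_le_card hsub
    rw [Fin.card_Iio] at this
    omega

lemma blk_lo_le_iff {N : ℕ} (α : Fin N → ℕ) (x : Fin (∑ i, α i)) (p : Fin N) :
    ∑ i ∈ Finset.Iio p, α i ≤ (x : ℕ) ↔ (p : ℕ) ≤ (blkIdx α x : ℕ) := by
  rcases Nat.eq_zero_or_pos (p : ℕ) with hp | hp
  · simp only [hp, Nat.zero_le, iff_true]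
    have : Finset.Iio p = ∅ := by
      ext q; simp only [Finset.mem_Iio, Finset.notMem_empty, iff_false, Fin.lt_def]; omega
    simp [this]
  · have hp' : (p : ℕ) - 1 < N := by omega
    have hIic : Finset.Iic (⟨(p : ℕ) - 1, hp'⟩ : Fin N) = Finset.Iio p := by
      ext q; simp only [Finset.mem_Iic, Finset.mem_Iio, Fin.le_def, Fin.lt_def]; omega
    have := blk_le_iff α x ⟨(p : ℕ) - 1, hp'⟩
    rw [hIic] at this
    simp only [this]
    omega

lemma blkIdx_eq_iff {N : ℕ} (α : Fin N → ℕ) (x : Fin (∑ i, α i)) (I : Fin N) :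
    blkIdx α x = I ↔
      (∑ i ∈ Finset.Iio I, α i ≤ (x : ℕ) ∧ (x : ℕ) < ∑ i ∈ Finset.Iic I, α i) := by
  have h1 := blk_le_iff α x I
  have h2 := blk_lo_le_iff α x I
  rw [Fin.ext_iff]
  omega

lemma blkIdx_congr {N : ℕ} (β : Fin N → ℕ) (x y : Fin (∑ i, β i)) (h : (x : ℕ) = (y : ℕ)) :
    blkIdx β x = blkIdx β y :=
  congrArg _ (Fin.ext h)

lemma fin_val_succAbove {m : ℕ} (p : Fin (m + 1)) (k : Fin m) :
    ((p.succAbove k) : ℕ) = if (k : ℕ) < (p : ℕ) then (k : ℕ) else (k : ℕ) + 1 := by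
  rcases lt_or_ge (k : ℕ) (p : ℕ) with h | h
  · rw [Fin.succAbove_of_castSucc_lt _ _ (by rw [Fin.lt_def]; simpa using h), if_pos h]
    rfl
  · rw [Fin.succAbove_of_le_castSucc _ _ (by rw [Fin.le_def]; simpa using h),
      if_neg (not_lt.mpr h), Fin.val_succ]

lemma sum_blk_sub {N : ℕ} (α : Fin N → ℕ) (I : Fin N) (hI : 1 ≤ α I) (s : Finset (Fin N)) :
    ∑ i ∈ s, (α i - if i = I then 1 else 0) = ∑ i ∈ s, α i - (if I ∈ s then 1 else 0) := by
  rw [Finset.sum_tsub_distrib]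
  · congr 1
    simp [Finset.sum_ite_eq' s I (fun _ => 1)]
  · intro i _
    split_ifs with h
    · subst h; exact hI
    · exact Nat.zero_le _

lemma card_blk {N : ℕ} (β : Fin N → ℕ) (J : Fin N) :
    (Finset.univ.filter (fun y : Fin (∑ i, β i) => blkIdx β y = J)).card = β J := by
  have hhi : ∑ i ∈ Finset.Iic J, β i ≤ ∑ i, β i :=
    Finset.sum_le_sum_of_subset (Finset.subset_univ _)
  have hlohi : ∑ i ∈ Finset.Iio J, β i + β J = ∑ i ∈ Finset.Iic J, β i := by
    rw [← Finset.Iio_insert J, Finset.sum_insert (by simp)]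
    ring
  have hcard : (Finset.univ.filter (fun y : Fin (∑ i, β i) => blkIdx β y = J)).card
      = (Finset.Ico (∑ i ∈ Finset.Iio J, β i) (∑ i ∈ Finset.Iic J, β i)).card := by
    refine Finset.card_bij (fun y _ => (y : ℕ)) ?_ ?_ ?_
    · intro y hy
      simp only [Finset.mem_filter] at hy
      have := (blkIdx_eq_iff β y J).mp hy.2
      simp only [Finset.mem_Ico]
      omega
    · intro a _ b _ h
      exact Fin.ext h
    · intro b hb
      simp only [Finset.mem_Ico] at hb
      refine ⟨⟨b, lt_of_lt_of_le hb.2 hhi⟩, ?_, rfl⟩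
      simp only [Finset.mem_filter, Finset.mem_univ, true_and]
      exact (blkIdx_eq_iff β _ J).mpr ⟨hb.1, hb.2⟩
  rw [hcard, Nat.card_Ico]
  omega

lemma card_blk' {N m : ℕ} (β : Fin N → ℕ) (h : m = ∑ i, β i) (J : Fin N) :
    (Finset.univ.filter (fun y : Fin m => blkIdx β (Fin.cast h y) = J)).card = β J := by
  subst h
  simpa using card_blk β J

lemma blk_del {N : ℕ} (α : Fin N → ℕ) (I : Fin N) (hI : 1 ≤ α I)
    (hc : ∑ i, α i = (∑ i, (α i - if i = I then 1 else 0)) + 1)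
    (x₀ : Fin (∑ i, α i)) (hx : blkIdx α x₀ = I)
    (k : Fin (∑ i, (α i - if i = I then 1 else 0))) :
    blkIdx α (Fin.cast hc.symm ((Fin.cast hc x₀).succAbove k)) =
      blkIdx (fun i => α i - if i = I then 1 else 0) k := by
  have hk := (blkIdx_eq_iff (fun i => α i - if i = I then 1 else 0) k
    (blkIdx (fun i => α i - if i = I then 1 else 0) k)).mp rfl
  simp only [sum_blk_sub α I hI] at hk
  simp only [Finset.mem_Iio, Finset.mem_Iic, Fin.lt_def, Fin.le_def] at hk
  have hx' := (blkIdx_eq_iff α x₀ I).mp hx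
  have m1 : (I : ℕ) < ((blkIdx (fun i => α i - if i = I then 1 else 0) k) : ℕ) →
      ∑ i ∈ Finset.Iic I, α i ≤
      ∑ i ∈ Finset.Iio (blkIdx (fun i => α i - if i = I then 1 else 0) k), α i := by
    intro h
    refine Finset.sum_le_sum_of_subset (fun q hq => ?_)
    simp only [Finset.mem_Iic, Fin.le_def] at hq
    simp only [Finset.mem_Iio, Fin.lt_def]
    omega
  have m2 : ((blkIdx (fun i => α i - if i = I then 1 else 0) k) : ℕ) < (I : ℕ) →
      ∑ i ∈ Finset.Iic (blkIdx (fun i => α i - if i = I then 1 else 0) k), α i ≤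
      ∑ i ∈ Finset.Iio I, α i := by
    intro h
    refine Finset.sum_le_sum_of_subset (fun q hq => ?_)
    simp only [Finset.mem_Iic, Fin.le_def] at hq
    simp only [Finset.mem_Iio, Fin.lt_def]
    omega
  have m4 : (I : ℕ) ≤ ((blkIdx (fun i => α i - if i = I then 1 else 0) k) : ℕ) →
      1 ≤ ∑ i ∈ Finset.Iic (blkIdx (fun i => α i - if i = I then 1 else 0) k), α i := by
    intro h
    calc 1 ≤ α I := hI
    _ ≤ _ := Finset.single_le_sum (fun i _ => Nat.zero_le _)
      (Finset.mem_Iic.mpr (Fin.le_def.mpr h))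
  have m5 : (I : ℕ) < ((blkIdx (fun i => α i - if i = I then 1 else 0) k) : ℕ) →
      1 ≤ ∑ i ∈ Finset.Iio (blkIdx (fun i => α i - if i = I then 1 else 0) k), α i := by
    intro h
    calc 1 ≤ α I := hI
    _ ≤ _ := Finset.single_le_sum (fun i _ => Nat.zero_le _)
      (Finset.mem_Iio.mpr (Fin.lt_def.mpr h))
  have hyval : (((Fin.cast hc x₀).succAbove k : Fin _) : ℕ) =
      if (k : ℕ) < (x₀ : ℕ) then (k : ℕ) else (k : ℕ) + 1 := by
    rw [fin_val_succAbove, Fin.coe_cast]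
  refine (blkIdx_eq_iff α _ _).mpr ?_
  rw [Fin.coe_cast, hyval]
  split_ifs at hk ⊢ with h1 h2 h3 <;> omega
/-- **Block-row expansion of the permanent of a block-constant matrix.**
For multi-indices `α, β : Fin N → ℕ` of common weight `n ≥ 1` and a row-block index `I`
with `α I ≥ 1`, the permanent `P(α, β)` of the block-constant matrix `G^{α,β}` satisfies
`P(α, β) = ∑_J β_J · g I J · P(α - e_I, β - e_J)` (the terms with `β J = 0` vanish,
thanks to the factor `β J`, so truncated subtraction is harmless there). -/
theorem block_permanent_row_expansion (N n : ℕ) (hn : 1 ≤ n) (g : Fin N → Fin N → ℂ)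
    (α β : Fin N → ℕ) (hα : ∑ i, α i = n) (hβ : ∑ i, β i = n) (I : Fin N) (hI : 1 ≤ α I) :
    blockPerm g α β =
      ∑ J : Fin N, (β J : ℂ) * g I J *
        blockPerm g (fun i => α i - if i = I then 1 else 0)
          (fun i => β i - if i = J then 1 else 0) := by
  have hab : ∑ i, α i = ∑ i, β i := by rw [hα, hβ]
  have hm : ∑ i, α i = (n - 1).succ := by omega
  have hnβ : (n - 1).succ = ∑ i, β i := by omega
  have hloα : ∑ i ∈ Finset.Iio I, α i + α I = ∑ i ∈ Finset.Iic I, α i := by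
    rw [← Finset.Iio_insert I, Finset.sum_insert (by simp)]
    ring
  have hIicα : ∑ i ∈ Finset.Iic I, α i ≤ ∑ i, α i :=
    Finset.sum_le_sum_of_subset (Finset.subset_univ _)
  have hx₀lt : ∑ i ∈ Finset.Iio I, α i < ∑ i, α i := by omega
  have hx : blkIdx α ⟨∑ i ∈ Finset.Iio I, α i, hx₀lt⟩ = I := by
    refine (blkIdx_eq_iff α ⟨_, hx₀lt⟩ I).mpr ⟨le_rfl, ?_⟩
    show ∑ i ∈ Finset.Iio I, α i < ∑ i ∈ Finset.Iic I, α i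
    omega
  have hsumα' : ∑ i, (α i - if i = I then 1 else 0) = n - 1 := by
    rw [sum_blk_sub α I hI, if_pos (Finset.mem_univ I)]
    omega
  have hcα : ∑ i, α i = (∑ i, (α i - if i = I then 1 else 0)) + 1 := by omega
  conv_lhs => simp only [blockPerm]
  rw [dif_pos hab, ← permanent_cast hm.symm, perm_succ_row _ (Fin.cast hm ⟨_, hx₀lt⟩),
    ← Finset.sum_fiberwise Finset.univ (fun y : Fin (n - 1).succ => blkIdx β (Fin.cast hnβ y))]
  refine Finset.sum_congr rfl fun J _ => ?_
  refine Eq.trans (b := ((Finset.univ.filter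
      (fun y : Fin (n - 1).succ => blkIdx β (Fin.cast hnβ y) = J)).card : ℕ) •
      (g I J * blockPerm g (fun i => α i - if i = I then 1 else 0)
        (fun i => β i - if i = J then 1 else 0))) ?_ ?_
  · rw [← Finset.sum_const]
    refine Finset.sum_congr rfl fun y hy => ?_
    simp only [Finset.mem_filter] at hy
    have hyJ : blkIdx β (Fin.cast hnβ y) = J := hy.2
    have hk := (blkIdx_eq_iff β (Fin.cast hnβ y) J).mp hyJ
    have hloβ : ∑ i ∈ Finset.Iio J, β i + β J = ∑ i ∈ Finset.Iic J, β i := by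
      rw [← Finset.Iio_insert J, Finset.sum_insert (by simp)]
      ring
    have hβJ : 1 ≤ β J := by omega
    have hsumβ' : ∑ i, (β i - if i = J then 1 else 0) = n - 1 := by
      rw [sum_blk_sub β J hβJ, if_pos (Finset.mem_univ J)]
      omega
    have hcβ : ∑ i, β i = (∑ i, (β i - if i = J then 1 else 0)) + 1 := by omega
    have hEq : ∑ i, (α i - if i = I then 1 else 0)
        = ∑ i, (β i - if i = J then 1 else 0) := by omega
    simp only [Matrix.submatrix_apply, Matrix.of_apply]
    have hrI : blkIdx α (Fin.cast hm.symm (Fin.cast hm ⟨_, hx₀lt⟩)) = I := by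
      exact Eq.trans (blkIdx_congr α _ _ (by simp)) hx
    have hyJ' : blkIdx β (Fin.cast hab (Fin.cast hm.symm y)) = J := by
      exact Eq.trans (blkIdx_congr β _ _ (by simp)) hyJ
    rw [hrI, hyJ']
    congr 1
    simp only [blockPerm]
    rw [dif_pos hEq, ← permanent_cast hsumα'.symm]
    congr 1
    ext k l
    simp only [Matrix.submatrix_apply, Matrix.of_apply]
    have h1 : blkIdx α (Fin.cast hm.symm
        ((Fin.cast hm (⟨_, hx₀lt⟩ : Fin (∑ i, α i))).succAbove k))
        = blkIdx (fun i => α i - if i = I then 1 else 0) (Fin.cast hsumα'.symm k) := by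
      exact Eq.trans (blkIdx_congr α _ _ (by simp [fin_val_succAbove]))
        (blk_del α I hI hcα ⟨_, hx₀lt⟩ hx (Fin.cast hsumα'.symm k))
    have h2 : blkIdx β (Fin.cast hab (Fin.cast hm.symm (y.succAbove l)))
        = blkIdx (fun i => β i - if i = J then 1 else 0)
          (Fin.cast hEq (Fin.cast hsumα'.symm l)) := by
      calc blkIdx β (Fin.cast hab (Fin.cast hm.symm (y.succAbove l)))
          = blkIdx β (Fin.cast hcβ.symm
            ((Fin.cast hcβ (Fin.cast hnβ y)).succAbove (Fin.cast hsumβ'.symm l))) :=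
            blkIdx_congr β _ _ (by simp [fin_val_succAbove])
        _ = blkIdx (fun i => β i - if i = J then 1 else 0) (Fin.cast hsumβ'.symm l) :=
            blk_del β J hβJ hcβ _ hyJ _
        _ = blkIdx (fun i => β i - if i = J then 1 else 0)
            (Fin.cast hEq (Fin.cast hsumα'.symm l)) := blkIdx_congr _ _ _ (by simp)
    rw [h1, h2]
  · rw [card_blk' β hnβ J, nsmul_eq_mul, ← mul_assoc]
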